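/- Let $A : D(A) \to S$ be a module homomorphism on a complete $RN$ module with $L^0_{++}(\mathcal{F}) \subset \rho(A)$, and suppose there is $M \in L^0_+(\mathcal{F})$, $M \ge 1$, such that $\|\xi^n R(\xi,A)^n\| \le M$ for all $n \in N$ and $\xi \in L^0_{++}(\mathcal{F})$. Then there exists an $L^0$-norm $|\cdot|$ on $S$, equivalent to $\|\cdot\|$, with $\|x\| \le |x| \le M\|x\|$ for all $x$ and $|\xi R(\xi,A)x| \le |x|$ for all $x \in S$, $\xi \in L^0_{++}(\mathcal{F})$. -/

import Mathlib

/- Preamble: random normed modules over `L⁰(𝓕,K)`, the `(ε,λ)`-topology,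
`C₀`-semigroups of continuous module homomorphisms and resolvents. -/

open MeasureTheory MeasureTheory.AEEqFun Filter Set
noncomputable section

namespace MeasureTheory.AEEqFun
variable {α : Type*} [MeasurableSpace α] {μ : Measure α}
variable {γ : Type*} [TopologicalSpace γ] [CommRing γ] [IsTopologicalRing γ]

noncomputable instance instNatCast' : NatCast (α →ₘ[μ] γ) := ⟨fun n => const α (n : γ)⟩
noncomputable instance instIntCast' : IntCast (α →ₘ[μ] γ) := ⟨fun n => const α (n : γ)⟩

/-- `L⁰(𝓕,K)` is a commutative ring under the pointwise operations. -/
noncomputable instance instCommRing' : CommRing (α →ₘ[μ] γ) :=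
  toGerm_injective.commRing toGerm zero_toGerm one_toGerm add_toGerm mul_toGerm
    neg_toGerm sub_toGerm (fun n x => smul_toGerm n x) (fun n x => smul_toGerm n x)
    pow_toGerm (fun _ => rfl) (fun _ => rfl)
end MeasureTheory.AEEqFun

namespace RNTheory

variable {Ω : Type*} [MeasurableSpace Ω] {μ : Measure Ω}

/-- The pointwise absolute value `|ξ| ∈ L⁰₊(𝓕)` of `ξ ∈ L⁰(𝓕,K)`. -/
def l0abs {K : Type*} [RCLike K] (ξ : Ω →ₘ[μ] K) : Ω →ₘ[μ] ℝ :=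
  ξ.comp (fun a => ‖a‖) continuous_norm

/-- Pointwise exponential on `L⁰(𝓕,ℝ)`. -/
def l0exp (ξ : Ω →ₘ[μ] ℝ) : Ω →ₘ[μ] ℝ := ξ.comp Real.exp Real.continuous_exp

/-- Pointwise real part on `L⁰(𝓕,ℂ)`. -/
def l0re (ξ : Ω →ₘ[μ] ℂ) : Ω →ₘ[μ] ℝ := ξ.comp Complex.re Complex.continuous_re

/-- The embedding of `L⁰(𝓕,ℝ)` into `L⁰(𝓕,K)`. -/
def l0ofReal (K : Type*) [RCLike K] (ξ : Ω →ₘ[μ] ℝ) : Ω →ₘ[μ] K :=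
  ξ.comp (fun r => (RCLike.ofReal r : K)) RCLike.continuous_ofReal

/-- The constant element of `L⁰(𝓕,K)` given by the real number `t`. -/
def rconst (K : Type*) [RCLike K] (μ : Measure Ω) (t : ℝ) : Ω →ₘ[μ] K :=
  AEEqFun.const Ω ((RCLike.ofReal t : K))

/-- `ξ ∈ L⁰₊₊(𝓕)`, i.e. `ξ > 0` on `Ω`. -/
def L0pos (ξ : Ω →ₘ[μ] ℝ) : Prop := ∀ᵐ ω ∂μ, 0 < ξ ω

section Top

variable {S : Type*} [AddCommGroup S]

/-- The `(ε,λ)`-neighborhood of `x₀`: all `y` with `P(‖y - x₀‖ < ε) > 1 - λ`. -/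
def Nset (nrm : S → Ω →ₘ[μ] ℝ) (x₀ : S) (ε lam : ℝ) : Set S :=
  {y | 1 - lam < (μ {ω | nrm (y - x₀) ω < ε}).toReal}

theorem Nset_mono [IsFiniteMeasure μ] (nrm : S → Ω →ₘ[μ] ℝ) (x₀ : S) {ε₁ ε₂ lam₁ lam₂ : ℝ}
    (hε : ε₁ ≤ ε₂) (hlam : lam₁ ≤ lam₂) : Nset nrm x₀ ε₁ lam₁ ⊆ Nset nrm x₀ ε₂ lam₂ := by
  intro y hy
  have h1 : (μ {ω | nrm (y - x₀) ω < ε₁}).toReal ≤ (μ {ω | nrm (y - x₀) ω < ε₂}).toReal :=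
    ENNReal.toReal_mono (measure_ne_top μ _) (measure_mono (fun ω h => lt_of_lt_of_le h hε))
  exact lt_of_le_of_lt (by linarith) (lt_of_lt_of_le hy h1)

/-- The `(ε,λ)`-topology on an `RN` module. -/
def elTop [IsFiniteMeasure μ] (nrm : S → Ω →ₘ[μ] ℝ) : TopologicalSpace S where
  IsOpen U := ∀ x ∈ U, ∃ ε > (0:ℝ), ∃ lam : ℝ, 0 < lam ∧ lam < 1 ∧ Nset nrm x ε lam ⊆ U
  isOpen_univ := fun _ _ => ⟨1, one_pos, 1/2, by norm_num, by norm_num, fun _ _ => trivial⟩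
  isOpen_inter := by
    intro U V hU hV x hx
    obtain ⟨ε₁, hε₁, l₁, hl₁, hl₁', hN₁⟩ := hU x hx.1
    obtain ⟨ε₂, hε₂, l₂, hl₂, hl₂', hN₂⟩ := hV x hx.2
    refine ⟨min ε₁ ε₂, lt_min hε₁ hε₂, min l₁ l₂, lt_min hl₁ hl₂,
      lt_of_le_of_lt (min_le_left _ _) hl₁', fun y hy => ⟨?_, ?_⟩⟩
    · exact hN₁ (Nset_mono nrm x (min_le_left _ _) (min_le_left _ _) hy)
    · exact hN₂ (Nset_mono nrm x (min_le_right _ _) (min_le_right _ _) hy)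
  isOpen_sUnion := by
    intro s hs x hx
    obtain ⟨U, hUs, hxU⟩ := hx
    obtain ⟨ε, hε, lam, h1, h2, hN⟩ := hs U hUs x hxU
    exact ⟨ε, hε, lam, h1, h2, fun y hy => ⟨U, hUs, hN hy⟩⟩

/-- A sequence in an `RN` module is Cauchy (in probability). -/
def IsCauchyRN (nrm : S → Ω →ₘ[μ] ℝ) (x : ℕ → S) : Prop :=
  ∀ ε : ℝ, 0 < ε → ∃ N : ℕ, ∀ m ≥ N, ∀ n ≥ N,
    (μ {ω | ε ≤ nrm (x m - x n) ω}).toReal < ε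

/-- The `RN` module `S` is complete: every Cauchy sequence converges in the
`(ε,λ)`-topology. -/
def IsCompleteRN [IsFiniteMeasure μ] (nrm : S → Ω →ₘ[μ] ℝ) : Prop :=
  ∀ x : ℕ → S, IsCauchyRN nrm x → ∃ y, Tendsto x atTop (@nhds S (elTop nrm) y)

end Top

section RNModule

variable (K : Type*) [RCLike K] {S : Type*} [AddCommGroup S] [Module (Ω →ₘ[μ] K) S]

/-- `(S, nrm)` is a random normed module (`RN` module) over `K` with base `(Ω,𝓕,P)`. -/
structure IsRNNorm (nrm : S → Ω →ₘ[μ] ℝ) : Prop where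
  nonneg : ∀ x, 0 ≤ nrm x
  smul_eq : ∀ (ξ : Ω →ₘ[μ] K) (x : S), nrm (ξ • x) = l0abs ξ * nrm x
  add_le : ∀ x y, nrm (x + y) ≤ nrm x + nrm y
  definite : ∀ x, nrm x = 0 → x = 0

section Semigroup
variable [IsFiniteMeasure μ]

/-- A family `{T t : t ≥ 0}` of continuous module homomorphisms (equivalently, of a.s. bounded
module homomorphisms) forming a `C₀`-semigroup on the `RN` module `S`. -/
structure IsC0Semigroup (nrm : S → Ω →ₘ[μ] ℝ) (T : ℝ → S →ₗ[Ω →ₘ[μ] K] S) : Prop where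
  bounded : ∀ t, 0 ≤ t → ∃ ξ : Ω →ₘ[μ] ℝ, 0 ≤ ξ ∧ ∀ x, nrm (T t x) ≤ ξ * nrm x
  id_eq : T 0 = LinearMap.id
  comp_eq : ∀ s t, 0 ≤ s → 0 ≤ t → T (s + t) = (T s).comp (T t)
  strong_cont : ∀ x : S, Tendsto (fun t => T t x) (nhdsWithin 0 (Ioi 0)) (@nhds S (elTop nrm) x)

/-- The `C₀`-semigroup `T` is a.s. bounded: `⋁_{t ∈ [0,L]} ‖T(t)‖ ∈ L⁰₊` for some `L > 0`. -/
def IsASBounded (nrm : S → Ω →ₘ[μ] ℝ) (T : ℝ → S →ₗ[Ω →ₘ[μ] K] S) : Prop :=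
  ∃ L : ℝ, 0 < L ∧ ∃ ξ : Ω →ₘ[μ] ℝ, 0 ≤ ξ ∧ ∀ t ∈ Icc 0 L, ∀ x, nrm (T t x) ≤ ξ * nrm x

/-- `GenRel nrm T x y` says `x ∈ D(A)` and `y = A x`, where `(A, D(A))` is the infinitesimal
generator of the semigroup `T`: `y = lim_{t ↓ 0} (T(t)x - x)/t` in the `(ε,λ)`-topology. -/
def GenRel (nrm : S → Ω →ₘ[μ] ℝ) (T : ℝ → S →ₗ[Ω →ₘ[μ] K] S) (x y : S) : Prop :=
  Tendsto (fun t : ℝ => rconst K μ t⁻¹ • (T t x - x)) (nhdsWithin 0 (Ioi 0))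
    (@nhds S (elTop nrm) y)

end Semigroup

/-- `R` is the resolvent `R(ξ,A) = (ξI - A)⁻¹ ∈ B(S)` of the module homomorphism
`A : D(A) → S`, i.e. `ξ ∈ ρ(A)`. -/
structure IsResolvent (nrm : S → Ω →ₘ[μ] ℝ) (p : Submodule (Ω →ₘ[μ] K) S)
    (A : p →ₗ[Ω →ₘ[μ] K] S) (ξ : Ω →ₘ[μ] K) (R : S →ₗ[Ω →ₘ[μ] K] S) : Prop where
  mem : ∀ x : S, R x ∈ p
  right_inv : ∀ x : S, ξ • R x - A ⟨R x, mem x⟩ = x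
  left_inv : ∀ y : p, R (ξ • (y : S) - A y) = (y : S)
  bounded : ∃ c : Ω →ₘ[μ] ℝ, 0 ≤ c ∧ ∀ x, nrm (R x) ≤ c * nrm x

end RNModule

end RNTheory

open RNTheory

/- For `ξ ∈ L⁰₊₊` the orbit norm `sup_n ‖(ξ R(ξ))ⁿ x‖` lies between `‖x‖` and `M ‖x‖`, and by
the resolvent identity `ξ · ζR(ζ)x = ζ · ξR(ξ)x + (ξ - ζ) · ξR(ξ)(ζR(ζ)x)` it is contracted by
`ζ R(ζ)` for every `ζ ≤ ξ`. Hence orbit norms increase with `ξ`, and their supremum over the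
constants `ξ = 1, 2, 3, …` is contracted by `ξ R(ξ)` whenever `ξ` is bounded by a constant.
A general `ξ` is reduced to `ζ = ξ ⊓ (k + 1)`: again by the resolvent identity,
`ξR(ξ)x - ζR(ζ)x` is a multiple of `ξ - ζ`, which vanishes on `{ξ ≤ k + 1}`, and these sets
exhaust `Ω`. -/

namespace MeasureTheory.AEEqFun

variable {α : Type*} [MeasurableSpace α] {μ : Measure α}

instance : IsOrderedAddMonoid (α →ₘ[μ] ℝ) where
  add_le_add_left f g hfg h := coeFn_le.1 <| by
    filter_upwards [coeFn_le.2 hfg, coeFn_add f h, coeFn_add g h] with ω hω ef eg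
    simpa only [ef, eg, Pi.add_apply] using add_le_add_left hω (h ω)

instance : ZeroLEOneClass (α →ₘ[μ] ℝ) where
  zero_le_one := coeFn_le.1 <| by
    filter_upwards [coeFn_zero (β := ℝ) (μ := μ), coeFn_one (β := ℝ) (μ := μ)] with ω e0 e1
    simp [e0, e1]

instance : IsOrderedRing (α →ₘ[μ] ℝ) :=
  .of_mul_nonneg fun f g hf hg => coeFn_le.1 <| by
    filter_upwards [coeFn_le.2 hf, coeFn_le.2 hg, coeFn_mul f g,
      coeFn_zero (β := ℝ) (μ := μ)] with ω hfω hgω efg e0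
    simp only [e0, efg, Pi.zero_apply, Pi.mul_apply] at hfω hgω ⊢
    exact mul_nonneg hfω hgω

/-- Countable pointwise supremum in `L⁰`. The order lemmas assume a bound: for an unbounded
family the pointwise `⨆` on `ℝ` is a junk value. -/
def iSupSeq (f : ℕ → α →ₘ[μ] ℝ) : α →ₘ[μ] ℝ :=
  mk (fun ω => ⨆ n, f n ω)
    (AEMeasurable.iSup fun n => (f n).aestronglyMeasurable.aemeasurable).aestronglyMeasurable

theorem coeFn_iSupSeq (f : ℕ → α →ₘ[μ] ℝ) : ⇑(iSupSeq f) =ᵐ[μ] fun ω => ⨆ n, f n ω :=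
  coeFn_mk _ _

theorem iSupSeq_le {f : ℕ → α →ₘ[μ] ℝ} {g : α →ₘ[μ] ℝ} (h : ∀ n, f n ≤ g) : iSupSeq f ≤ g :=
  coeFn_le.1 <| by
    filter_upwards [coeFn_iSupSeq f, ae_all_iff.2 fun n => coeFn_le.2 (h n)] with ω e hω
    exact e ▸ ciSup_le hω

theorem le_iSupSeq {f : ℕ → α →ₘ[μ] ℝ} {g : α →ₘ[μ] ℝ} (h : ∀ n, f n ≤ g) (k : ℕ) :
    f k ≤ iSupSeq f :=
  coeFn_le.1 <| by
    filter_upwards [coeFn_iSupSeq f, ae_all_iff.2 fun n => coeFn_le.2 (h n)] with ω e hω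
    exact e ▸ le_ciSup ⟨g ω, Set.forall_mem_range.2 hω⟩ k

theorem iSupSeq_mul_left (f : ℕ → α →ₘ[μ] ℝ) {c : α →ₘ[μ] ℝ} (hc : 0 ≤ c) :
    iSupSeq (fun n => c * f n) = c * iSupSeq f := by
  refine ext ?_
  filter_upwards [coeFn_iSupSeq (fun n => c * f n), coeFn_mul c (iSupSeq f), coeFn_iSupSeq f,
    ae_all_iff.2 fun n => coeFn_mul c (f n), coeFn_le.2 hc, coeFn_zero (β := ℝ) (μ := μ)]
    with ω e₁ e₂ e₃ e₄ hcω e₀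
  rw [e₁, e₂, Pi.mul_apply, e₃, Real.mul_iSup_of_nonneg (by simpa [e₀] using hcω)]
  exact iSup_congr fun n => e₄ n

theorem const_mono {β : Type*} [TopologicalSpace β] [Preorder β] :
    Monotone (const α : β → α →ₘ[μ] β) := fun s t hst =>
  coeFn_le.1 <| by
    filter_upwards [coeFn_const (μ := μ) α s, coeFn_const (μ := μ) α t] with ω e₁ e₂
    simpa [e₁, e₂] using hst

end MeasureTheory.AEEqFun

namespace RNTheory

variable {Ω : Type*} [MeasurableSpace Ω] {μ : Measure Ω}

theorem coeFn_l0abs {K : Type*} [RCLike K] (ζ : Ω →ₘ[μ] K) :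
    ⇑(l0abs ζ) =ᵐ[μ] fun ω => ‖ζ ω‖ :=
  coeFn_comp _ _ _

theorem coeFn_l0ofReal (K : Type*) [RCLike K] (ξ : Ω →ₘ[μ] ℝ) :
    ⇑(l0ofReal K ξ) =ᵐ[μ] fun ω => (ξ ω : K) :=
  coeFn_comp _ _ _

theorem l0abs_nonneg {K : Type*} [RCLike K] (ζ : Ω →ₘ[μ] K) : 0 ≤ l0abs ζ :=
  coeFn_le.1 <| by
    filter_upwards [coeFn_l0abs ζ, coeFn_zero (β := ℝ) (μ := μ)] with ω e e₀
    simp [e, e₀]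

theorem l0ofReal_sub (K : Type*) [RCLike K] (ξ ζ : Ω →ₘ[μ] ℝ) :
    l0ofReal K (ξ - ζ) = l0ofReal K ξ - l0ofReal K ζ :=
  ext <| by
    filter_upwards [coeFn_l0ofReal K (ξ - ζ), coeFn_l0ofReal K ξ, coeFn_l0ofReal K ζ,
      coeFn_sub ξ ζ, coeFn_sub (l0ofReal K ξ) (l0ofReal K ζ)] with ω e e₁ e₂ e₃ e₄
    simp [e, e₁, e₂, e₃, e₄]

theorem l0abs_l0ofReal {K : Type*} [RCLike K] {ξ : Ω →ₘ[μ] ℝ} (hξ : 0 ≤ ξ) :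
    l0abs (l0ofReal K ξ) = ξ :=
  ext <| by
    filter_upwards [coeFn_l0abs (l0ofReal K ξ), coeFn_l0ofReal K ξ, coeFn_le.2 hξ,
      coeFn_zero (β := ℝ) (μ := μ)] with ω e e₁ hω e₀
    simp only [e₀, Pi.zero_apply] at hω
    simp [e, e₁, abs_of_nonneg hω]

theorem L0pos.nonneg {ξ : Ω →ₘ[μ] ℝ} (hξ : L0pos ξ) : 0 ≤ ξ :=
  coeFn_le.1 <| by
    filter_upwards [hξ, coeFn_zero (β := ℝ) (μ := μ)] with ω hω e₀
    simpa [e₀] using hω.le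

theorem L0pos.inf {ξ ζ : Ω →ₘ[μ] ℝ} (hξ : L0pos ξ) (hζ : L0pos ζ) : L0pos (ξ ⊓ ζ) := by
  filter_upwards [hξ, hζ, coeFn_inf ξ ζ] with ω hξω hζω e
  simpa [e] using And.intro hξω hζω

theorem L0pos.le_of_mul_le_mul_left {ζ a b : Ω →ₘ[μ] ℝ} (hζ : L0pos ζ) (h : ζ * a ≤ ζ * b) :
    a ≤ b :=
  coeFn_le.1 <| by
    filter_upwards [hζ, coeFn_le.2 h, coeFn_mul ζ a, coeFn_mul ζ b] with ω hζω hω e₁ e₂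
    simp only [e₁, e₂, Pi.mul_apply] at hω
    exact _root_.le_of_mul_le_mul_left hω hζω

theorem l0pos_const {t : ℝ} (ht : 0 < t) : L0pos (const Ω t : Ω →ₘ[μ] ℝ) := by
  filter_upwards [coeFn_const (μ := μ) Ω t] with ω e
  simpa [e] using ht

theorem ae_exists_le_const_natCast_add_one (ξ : Ω →ₘ[μ] ℝ) :
    ∀ᵐ ω ∂μ, ∃ k : ℕ, ξ ω ≤ (const Ω ((k : ℝ) + 1) : Ω →ₘ[μ] ℝ) ω := by
  filter_upwards [ae_all_iff.2 fun k : ℕ => coeFn_const (μ := μ) Ω ((k : ℝ) + 1)] with ω e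
  refine ⟨⌈ξ ω⌉₊, ?_⟩
  rw [e, Function.const_apply]
  linarith [Nat.le_ceil (ξ ω)]

theorem le_of_forall_le_add_sub_inf_mul {a b ξ : Ω →ₘ[μ] ℝ} {c d : ℕ → Ω →ₘ[μ] ℝ}
    (hc : ∀ᵐ ω ∂μ, ∃ k, ξ ω ≤ c k ω) (h : ∀ k, a ≤ b + (ξ - ξ ⊓ c k) * d k) : a ≤ b :=
  coeFn_le.1 <| by
    filter_upwards [hc, ae_all_iff.2 fun k => coeFn_le.2 (h k),
      ae_all_iff.2 fun k => coeFn_add b ((ξ - ξ ⊓ c k) * d k),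
      ae_all_iff.2 fun k => coeFn_mul (ξ - ξ ⊓ c k) (d k),
      ae_all_iff.2 fun k => coeFn_sub ξ (ξ ⊓ c k),
      ae_all_iff.2 fun k => coeFn_inf ξ (c k)] with ω ⟨k, hk⟩ hω e₁ e₂ e₃ e₄
    have := hω k
    simp only [e₁ k, e₂ k, e₃ k, e₄ k, Pi.add_apply, Pi.mul_apply, Pi.sub_apply,
      inf_eq_left.2 hk, sub_self, zero_mul, add_zero] at this
    exact this

variable {K : Type*} [RCLike K] {S : Type*} [AddCommGroup S] [Module (Ω →ₘ[μ] K) S]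
  {nrm : S → Ω →ₘ[μ] ℝ} {M : Ω →ₘ[μ] ℝ}

def IsPowBounded (nrm : S → Ω →ₘ[μ] ℝ) (M : Ω →ₘ[μ] ℝ) (T : Module.End (Ω →ₘ[μ] K) S) :
    Prop :=
  ∀ (n : ℕ) (x : S), nrm ((T ^ n) x) ≤ M * nrm x

def orbitNorm (nrm : S → Ω →ₘ[μ] ℝ) (T : Module.End (Ω →ₘ[μ] K) S) (x : S) : Ω →ₘ[μ] ℝ :=
  iSupSeq fun n => nrm ((T ^ n) x)

section orbitNorm

variable {T : Module.End (Ω →ₘ[μ] K) S}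

theorem le_orbitNorm (hT : IsPowBounded nrm M T) (x : S) : nrm x ≤ orbitNorm nrm T x :=
  le_iSupSeq (fun n => hT n x) 0

theorem orbitNorm_le (hT : IsPowBounded nrm M T) (x : S) : orbitNorm nrm T x ≤ M * nrm x :=
  iSupSeq_le fun n => hT n x

theorem orbitNorm_smul (h : IsRNNorm K nrm) (ζ : Ω →ₘ[μ] K) (x : S) :
    orbitNorm nrm T (ζ • x) = l0abs ζ * orbitNorm nrm T x := by
  simp only [orbitNorm, map_smul, h.smul_eq]
  exact iSupSeq_mul_left _ (l0abs_nonneg ζ)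

theorem orbitNorm_add_le (h : IsRNNorm K nrm) (hT : IsPowBounded nrm M T) (x y : S) :
    orbitNorm nrm T (x + y) ≤ orbitNorm nrm T x + orbitNorm nrm T y :=
  iSupSeq_le fun n => by
    rw [map_add]
    exact (h.add_le _ _).trans
      (add_le_add (le_iSupSeq (fun m => hT m x) n) (le_iSupSeq (fun m => hT m y) n))

theorem orbitNorm_apply_le (hT : IsPowBounded nrm M T) (x : S) :
    orbitNorm nrm T (T x) ≤ orbitNorm nrm T x :=
  iSupSeq_le fun n => by
    rw [← Module.End.mul_apply, ← pow_succ]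
    exact le_iSupSeq (fun m => hT m x) (n + 1)

theorem orbitNorm_le_of_apply_le {q : S → Ω →ₘ[μ] ℝ} (hq : ∀ z, nrm z ≤ q z)
    (hqT : ∀ z, q (T z) ≤ q z) (x : S) : orbitNorm nrm T x ≤ q x :=
  iSupSeq_le fun n => (hq _).trans <| by
    induction n with
    | zero => exact le_rfl
    | succ n ih =>
      rw [pow_succ', Module.End.mul_apply]
      exact (hqT _).trans ih

end orbitNorm

variable {p : Submodule (Ω →ₘ[μ] K) S} {A : p →ₗ[Ω →ₘ[μ] K] S}

theorem IsResolvent.resolvent_identity {ξ ζ : Ω →ₘ[μ] K} {Rξ Rζ : S →ₗ[Ω →ₘ[μ] K] S}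
    (hξ : IsResolvent K nrm p A ξ Rξ) (hζ : IsResolvent K nrm p A ζ Rζ) (x : S) :
    Rζ x = Rξ x + (ξ - ζ) • Rξ (Rζ x) := by
  have h := hξ.left_inv ⟨Rζ x, hζ.mem x⟩
  have hsplit : ξ • Rζ x - A ⟨Rζ x, hζ.mem x⟩
      = (ξ - ζ) • Rζ x + (ζ • Rζ x - A ⟨Rζ x, hζ.mem x⟩) := by
    rw [sub_smul]; abel
  rw [Submodule.coe_mk, hsplit, hζ.right_inv, map_add, map_smul] at h
  exact h.symm.trans (add_comm _ _)

theorem IsResolvent.smul_sub_smul {ξ ζ : Ω →ₘ[μ] K} {Rξ Rζ : S →ₗ[Ω →ₘ[μ] K] S}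
    (hξ : IsResolvent K nrm p A ξ Rξ) (hζ : IsResolvent K nrm p A ζ Rζ) (x : S) :
    ξ • Rξ x - ζ • Rζ x = (ξ - ζ) • (Rξ x - ζ • Rξ (Rζ x)) := by
  conv_lhs => rw [hξ.resolvent_identity hζ x]
  module

theorem IsResolvent.orbitNorm_smul_apply_le (h : IsRNNorm K nrm) {ξ ζ : Ω →ₘ[μ] ℝ}
    {Rξ Rζ : S →ₗ[Ω →ₘ[μ] K] S} (hξ : IsResolvent K nrm p A (l0ofReal K ξ) Rξ)
    (hζ : IsResolvent K nrm p A (l0ofReal K ζ) Rζ) (hζpos : L0pos ζ) (hζξ : ζ ≤ ξ)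
    (hT : IsPowBounded nrm M (l0ofReal K ξ • Rξ)) (x : S) :
    orbitNorm nrm (l0ofReal K ξ • Rξ) (l0ofReal K ζ • Rζ x)
      ≤ orbitNorm nrm (l0ofReal K ξ • Rξ) x := by
  set T := l0ofReal K ξ • Rξ
  set N := orbitNorm nrm T
  set y := l0ofReal K ζ • Rζ x
  have hsplit : l0ofReal K ξ • y = l0ofReal K ζ • T x + l0ofReal K (ξ - ζ) • T y := by
    simp only [T, y, LinearMap.smul_apply, map_smul, l0ofReal_sub]
    conv_lhs => rw [hξ.resolvent_identity hζ x]
    module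
  have hξ0 : 0 ≤ ξ := hζpos.nonneg.trans hζξ
  have hN_smul : ∀ (a : Ω →ₘ[μ] K) z, N (a • z) = l0abs a * N z := orbitNorm_smul h
  have hN_add : ∀ z z', N (z + z') ≤ N z + N z' := orbitNorm_add_le h hT
  have key : ξ * N y ≤ ζ * N x + (ξ - ζ) * N y :=
    calc ξ * N y = N (l0ofReal K ζ • T x + l0ofReal K (ξ - ζ) • T y) := by
          rw [← hsplit, hN_smul (l0ofReal K ξ) y, l0abs_l0ofReal hξ0]
      _ ≤ ζ * N (T x) + (ξ - ζ) * N (T y) := by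
          refine (hN_add _ _).trans_eq ?_
          rw [hN_smul, hN_smul, l0abs_l0ofReal hζpos.nonneg, l0abs_l0ofReal (sub_nonneg.2 hζξ)]
      _ ≤ ζ * N x + (ξ - ζ) * N y :=
          add_le_add (mul_le_mul_of_nonneg_left (orbitNorm_apply_le hT x) hζpos.nonneg)
            (mul_le_mul_of_nonneg_left (orbitNorm_apply_le hT y) (sub_nonneg.2 hζξ))
  refine hζpos.le_of_mul_le_mul_left ?_
  calc ζ * N y = ξ * N y - (ξ - ζ) * N y := by ring
    _ ≤ ζ * N x := sub_le_iff_le_add.2 key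

theorem IsResolvent.orbitNorm_le_orbitNorm (h : IsRNNorm K nrm) {ξ ζ : Ω →ₘ[μ] ℝ}
    {Rξ Rζ : S →ₗ[Ω →ₘ[μ] K] S} (hξ : IsResolvent K nrm p A (l0ofReal K ξ) Rξ)
    (hζ : IsResolvent K nrm p A (l0ofReal K ζ) Rζ) (hζpos : L0pos ζ) (hζξ : ζ ≤ ξ)
    (hT : IsPowBounded nrm M (l0ofReal K ξ • Rξ)) (x : S) :
    orbitNorm nrm (l0ofReal K ζ • Rζ) x ≤ orbitNorm nrm (l0ofReal K ξ • Rξ) x := by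
  refine orbitNorm_le_of_apply_le (le_orbitNorm hT) (fun z => ?_) x
  rw [LinearMap.smul_apply]
  exact hξ.orbitNorm_smul_apply_le h hζ hζpos hζξ hT z

def iSupOrbitNorm (nrm : S → Ω →ₘ[μ] ℝ) (T : ℕ → Module.End (Ω →ₘ[μ] K) S) (x : S) :
    Ω →ₘ[μ] ℝ :=
  iSupSeq fun k => orbitNorm nrm (T k) x

section iSupOrbitNorm

variable {T : ℕ → Module.End (Ω →ₘ[μ] K) S}

theorem orbitNorm_le_iSupOrbitNorm (hT : ∀ k, IsPowBounded nrm M (T k)) (k : ℕ) (x : S) :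
    orbitNorm nrm (T k) x ≤ iSupOrbitNorm nrm T x :=
  le_iSupSeq (fun j => orbitNorm_le (hT j) x) k

theorem le_iSupOrbitNorm (hT : ∀ k, IsPowBounded nrm M (T k)) (x : S) :
    nrm x ≤ iSupOrbitNorm nrm T x :=
  (le_orbitNorm (hT 0) x).trans (orbitNorm_le_iSupOrbitNorm hT 0 x)

theorem iSupOrbitNorm_le (hT : ∀ k, IsPowBounded nrm M (T k)) (x : S) :
    iSupOrbitNorm nrm T x ≤ M * nrm x :=
  iSupSeq_le fun k => orbitNorm_le (hT k) x

theorem isRNNorm_iSupOrbitNorm (h : IsRNNorm K nrm) (hT : ∀ k, IsPowBounded nrm M (T k)) :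
    IsRNNorm K (iSupOrbitNorm nrm T) where
  nonneg x := (h.nonneg x).trans (le_iSupOrbitNorm hT x)
  smul_eq ζ x := by
    simp only [iSupOrbitNorm, orbitNorm_smul h]
    exact iSupSeq_mul_left _ (l0abs_nonneg ζ)
  add_le x y := iSupSeq_le fun k => (orbitNorm_add_le h (hT k) x y).trans
    (add_le_add (orbitNorm_le_iSupOrbitNorm hT k x) (orbitNorm_le_iSupOrbitNorm hT k y))
  definite x hx := h.definite x (le_antisymm ((le_iSupOrbitNorm hT x).trans hx.le) (h.nonneg x))

end iSupOrbitNorm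

section resolventFamily

variable {c : ℕ → Ω →ₘ[μ] ℝ} {R : ℕ → S →ₗ[Ω →ₘ[μ] K] S}

theorem iSupOrbitNorm_smul_resolvent_le_of_le (h : IsRNNorm K nrm)
    (hR : ∀ k, IsResolvent K nrm p A (l0ofReal K (c k)) (R k)) (hc : ∀ k, L0pos (c k))
    (hc_mono : Monotone c) (hpow : ∀ k, IsPowBounded nrm M (l0ofReal K (c k) • R k))
    {ζ : Ω →ₘ[μ] ℝ} {Rζ : S →ₗ[Ω →ₘ[μ] K] S} (hζ : IsResolvent K nrm p A (l0ofReal K ζ) Rζ)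
    (hζpos : L0pos ζ) {k : ℕ} (hζk : ζ ≤ c k) (x : S) :
    iSupOrbitNorm nrm (fun k => l0ofReal K (c k) • R k) (l0ofReal K ζ • Rζ x)
      ≤ iSupOrbitNorm nrm (fun k => l0ofReal K (c k) • R k) x :=
  iSupSeq_le fun j => by
    set i := max j k
    calc orbitNorm nrm (l0ofReal K (c j) • R j) (l0ofReal K ζ • Rζ x)
        ≤ orbitNorm nrm (l0ofReal K (c i) • R i) (l0ofReal K ζ • Rζ x) :=
          (hR i).orbitNorm_le_orbitNorm h (hR j) (hc j) (hc_mono (le_max_left j k)) (hpow i) _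
      _ ≤ orbitNorm nrm (l0ofReal K (c i) • R i) x :=
          (hR i).orbitNorm_smul_apply_le h hζ hζpos (hζk.trans (hc_mono (le_max_right j k)))
            (hpow i) x
      _ ≤ iSupOrbitNorm nrm (fun k => l0ofReal K (c k) • R k) x :=
          orbitNorm_le_iSupOrbitNorm hpow i x

theorem iSupOrbitNorm_smul_resolvent_le (h : IsRNNorm K nrm)
    (hR : ∀ k, IsResolvent K nrm p A (l0ofReal K (c k)) (R k)) (hc : ∀ k, L0pos (c k))
    (hc_mono : Monotone c) (hpow : ∀ k, IsPowBounded nrm M (l0ofReal K (c k) • R k))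
    (hres : ∀ ζ : Ω →ₘ[μ] ℝ, L0pos ζ → ∃ Rζ, IsResolvent K nrm p A (l0ofReal K ζ) Rζ)
    {ξ : Ω →ₘ[μ] ℝ} {Rξ : S →ₗ[Ω →ₘ[μ] K] S} (hξ : IsResolvent K nrm p A (l0ofReal K ξ) Rξ)
    (hξpos : L0pos ξ) (hξc : ∀ᵐ ω ∂μ, ∃ k, ξ ω ≤ c k ω) (x : S) :
    iSupOrbitNorm nrm (fun k => l0ofReal K (c k) • R k) (l0ofReal K ξ • Rξ x)
      ≤ iSupOrbitNorm nrm (fun k => l0ofReal K (c k) • R k) x := by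
  set N := iSupOrbitNorm nrm (fun k => l0ofReal K (c k) • R k)
  have hN : IsRNNorm K N := isRNNorm_iSupOrbitNorm h hpow
  choose Rz hRz using fun k => hres (ξ ⊓ c k) (hξpos.inf (hc k))
  refine le_of_forall_le_add_sub_inf_mul
    (d := fun k => N (Rξ x - l0ofReal K (ξ ⊓ c k) • Rξ (Rz k x))) hξc fun k => ?_
  set w := Rξ x - l0ofReal K (ξ ⊓ c k) • Rξ (Rz k x)
  have hsplit : l0ofReal K ξ • Rξ x = l0ofReal K (ξ - ξ ⊓ c k) • w
      + l0ofReal K (ξ ⊓ c k) • Rz k x := by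
    rw [← sub_eq_iff_eq_add, hξ.smul_sub_smul (hRz k) x, l0ofReal_sub]
  calc N (l0ofReal K ξ • Rξ x)
      = N (l0ofReal K (ξ - ξ ⊓ c k) • w + l0ofReal K (ξ ⊓ c k) • Rz k x) := by rw [hsplit]
    _ ≤ N (l0ofReal K (ξ - ξ ⊓ c k) • w) + N (l0ofReal K (ξ ⊓ c k) • Rz k x) := hN.add_le _ _
    _ ≤ N (l0ofReal K (ξ - ξ ⊓ c k) • w) + N x := add_le_add_right
        (iSupOrbitNorm_smul_resolvent_le_of_le h hR hc hc_mono hpow (hRz k)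
          (hξpos.inf (hc k)) inf_le_right x) _
    _ = N x + (ξ - ξ ⊓ c k) * N w := by
        rw [add_comm, hN.smul_eq, l0abs_l0ofReal (sub_nonneg.2 inf_le_left)]

end resolventFamily

end RNTheory

theorem renorming_lemma_general
    {Ω : Type*} [MeasurableSpace Ω] (μ : Measure Ω)
    (K : Type*) [RCLike K] {S : Type*} [AddCommGroup S] [Module (Ω →ₘ[μ] K) S]
    (nrm : S → Ω →ₘ[μ] ℝ) (h : IsRNNorm K nrm)
    (p : Submodule (Ω →ₘ[μ] K) S) (A : p →ₗ[Ω →ₘ[μ] K] S)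
    (M : Ω →ₘ[μ] ℝ)
    (hres : ∀ ξ : Ω →ₘ[μ] ℝ, L0pos ξ → ∃ R, IsResolvent K nrm p A (l0ofReal K ξ) R)
    (hpow : ∀ (ξ : Ω →ₘ[μ] ℝ) (R : S →ₗ[Ω →ₘ[μ] K] S), L0pos ξ →
      IsResolvent K nrm p A (l0ofReal K ξ) R → ∀ (n : ℕ) (x : S),
        nrm (((l0ofReal K ξ • R : Module.End (Ω →ₘ[μ] K) S) ^ n) x) ≤ M * nrm x) :
    ∃ nrm' : S → Ω →ₘ[μ] ℝ, IsRNNorm K nrm' ∧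
      (∀ x, nrm x ≤ nrm' x ∧ nrm' x ≤ M * nrm x) ∧
      (∀ (ξ : Ω →ₘ[μ] ℝ) (R : S →ₗ[Ω →ₘ[μ] K] S), L0pos ξ →
        IsResolvent K nrm p A (l0ofReal K ξ) R → ∀ x,
          nrm' (l0ofReal K ξ • R x) ≤ nrm' x) := by
  set c : ℕ → Ω →ₘ[μ] ℝ := fun k => const Ω ((k : ℝ) + 1)
  have hc : ∀ k, L0pos (c k) := fun k => l0pos_const (by positivity)
  have hc_mono : Monotone c :=
    const_mono.comp fun j k hjk => add_le_add_left (Nat.cast_le.2 hjk) 1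
  choose R hR using fun k => hres (c k) (hc k)
  have hpowc : ∀ k, IsPowBounded nrm M (l0ofReal K (c k) • R k) :=
    fun k => hpow (c k) (R k) (hc k) (hR k)
  refine ⟨iSupOrbitNorm nrm (fun k => l0ofReal K (c k) • R k), isRNNorm_iSupOrbitNorm h hpowc,
    fun x => ⟨le_iSupOrbitNorm hpowc x, iSupOrbitNorm_le hpowc x⟩, fun ξ Rξ hξpos hξ x => ?_⟩
  exact iSupOrbitNorm_smul_resolvent_le h hR hc hc_mono hpowc hres hξ hξpos
    (ae_exists_le_const_natCast_add_one ξ) x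

/-- Let `A : D(A) → S` be a module homomorphism on a complete `RN` module
with `L⁰₊₊(𝓕) ⊆ ρ(A)` and suppose `M ∈ L⁰₊(𝓕)`, `M ≥ 1`, satisfies
`‖ξⁿ R(ξ,A)ⁿ‖ ≤ M` for all `n ∈ ℕ` and `ξ ∈ L⁰₊₊(𝓕)`. Then there is an `L⁰`-norm `|·|`
on `S`, equivalent to `‖·‖`, with `‖x‖ ≤ |x| ≤ M‖x‖` for all `x` and
`|ξ R(ξ,A) x| ≤ |x|` for all `x ∈ S`, `ξ ∈ L⁰₊₊(𝓕)`. -/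
theorem renorming_lemma
    {Ω : Type*} [MeasurableSpace Ω] (μ : Measure Ω) [IsProbabilityMeasure μ]
    (K : Type*) [RCLike K] {S : Type*} [AddCommGroup S] [Module (Ω →ₘ[μ] K) S]
    (nrm : S → Ω →ₘ[μ] ℝ) (h : IsRNNorm K nrm) (hcomplete : IsCompleteRN nrm)
    (p : Submodule (Ω →ₘ[μ] K) S) (A : p →ₗ[Ω →ₘ[μ] K] S)
    (M : Ω →ₘ[μ] ℝ) (hM0 : 0 ≤ M) (hM1 : 1 ≤ M)
    (hres : ∀ ξ : Ω →ₘ[μ] ℝ, L0pos ξ → ∃ R, IsResolvent K nrm p A (l0ofReal K ξ) R)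
    (hpow : ∀ (ξ : Ω →ₘ[μ] ℝ) (R : S →ₗ[Ω →ₘ[μ] K] S), L0pos ξ →
      IsResolvent K nrm p A (l0ofReal K ξ) R → ∀ (n : ℕ) (x : S),
        nrm (((l0ofReal K ξ • R : Module.End (Ω →ₘ[μ] K) S) ^ n) x) ≤ M * nrm x) :
    ∃ nrm' : S → Ω →ₘ[μ] ℝ, IsRNNorm K nrm' ∧
      (∀ x, nrm x ≤ nrm' x ∧ nrm' x ≤ M * nrm x) ∧
      (∀ (ξ : Ω →ₘ[μ] ℝ) (R : S →ₗ[Ω →ₘ[μ] K] S), L0pos ξ →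
        IsResolvent K nrm p A (l0ofReal K ξ) R → ∀ x,
          nrm' (l0ofReal K ξ • R x) ≤ nrm' x) :=
  renorming_lemma_general μ K nrm h p A M hres hpow
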